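/- arXiv:2112.09218 — 3 statements merged into one kernel-verified Lean document; each statement's English description precedes it below -/
import Mathlib

section
/- For positive integers n, k, the group completion of M_{n,n+k} is a cyclic group of order k, and it is isomorphic (as a monoid) to the subset {nx, (n+1)x, …, (n+k−1)x} of M_{n,n+k}. -/
/-- The congruence on `ℕ` defining `M_{n,n+k}`: `a ~ b` iff `a = b`, or both
`a, b ≥ n` and `a ≡ b (mod k)`. -/
def mnkSetoid (n k : ℕ) : Setoid ℕ where
  r a b := a = b ∨ (n ≤ a ∧ n ≤ b ∧ a % k = b % k)
  iseqv := by
    refine ⟨fun a => Or.inl rfl, ?_, ?_⟩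
    · intro a b h; rcases h with h | h
      · exact Or.inl h.symm
      · exact Or.inr ⟨h.2.1, h.1, h.2.2.symm⟩
    · intro a b c h1 h2
      rcases h1 with h1 | h1 <;> rcases h2 with h2 | h2
      · exact Or.inl (h1.trans h2)
      · subst h1; exact Or.inr h2
      · subst h2; exact Or.inr h1
      · exact Or.inr ⟨h1.1, h2.2.1, h1.2.2.trans h2.2.2⟩

/-- The monoid `M_{n,n+k}` generated by `x` with relation `(n+k)x = nx`,
realised as `ℕ` modulo the above congruence; the element `i • x` corresponds to
the class of `i`. -/
def Mnk (n k : ℕ) : Type := Quotient (mnkSetoid n k)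

/-- The class of `i : ℕ` in `M_{n,n+k}`, i.e. the element `i • x`. -/
def Mnk.mk (n k : ℕ) (i : ℕ) : Mnk n k := Quotient.mk (mnkSetoid n k) i

/-- Addition on `M_{n,n+k}`, induced from addition on `ℕ`. -/
def Mnk.add (n k : ℕ) : Mnk n k → Mnk n k → Mnk n k :=
  Quotient.map₂ (· + ·) (by
    intro a a' ha b b' hb
    try dsimp only
    rcases ha with ha | ha <;> rcases hb with hb | hb
    · exact Or.inl (by omega)
    · subst ha; exact Or.inr ⟨by omega, by omega, Nat.ModEq.add_left a hb.2.2⟩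
    · subst hb; exact Or.inr ⟨by omega, by omega, Nat.ModEq.add_right b ha.2.2⟩
    · exact Or.inr ⟨by omega, by omega, Nat.ModEq.add ha.2.2 hb.2.2⟩)

/-!
For `i, j ≥ n` the classes of `i` and `j` agree exactly when `i ≡ j (mod k)`, so the classes of
`n, …, n + k - 1` form a copy of `ZMod k` inside `M_{n,n+k}`, its smallest ideal. The zero `e` of
that copy is idempotent, hence killed by every additive map `ψ` into a group, and `m ↦ m + e`
retracts `M_{n,n+k}` onto the ideal, compatibly with the residue map `M_{n,n+k} → ZMod k`. So `ψ`
factors through the residue map as `a ↦ ψ (the element of the ideal with residue a)`.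
-/

namespace Mnk

variable {n k : ℕ}

@[simp]
theorem add_mk (a b : ℕ) : Mnk.add n k (Mnk.mk n k a) (Mnk.mk n k b) = Mnk.mk n k (a + b) := rfl

@[elab_as_elim]
theorem ind {p : Mnk n k → Prop} (h : ∀ i, p (Mnk.mk n k i)) (m : Mnk n k) : p m :=
  Quotient.ind h m

variable (n k) in
def toZMod : Mnk n k → ZMod k :=
  Quotient.lift (fun i : ℕ => (i : ZMod k)) <| by
    rintro a b (rfl | ⟨-, -, h⟩)
    · rfl
    · exact (ZMod.natCast_eq_natCast_iff' a b k).2 h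

@[simp]
theorem toZMod_mk (i : ℕ) : toZMod n k (Mnk.mk n k i) = i := rfl

theorem toZMod_add (a b : Mnk n k) :
    toZMod n k (Mnk.add n k a b) = toZMod n k a + toZMod n k b := by
  induction a using Mnk.ind
  induction b using Mnk.ind
  simp

variable (n) in
def rep (a : ZMod k) : ℕ := n + (a - n).val

theorem le_rep (a : ZMod k) : n ≤ rep n a := Nat.le_add_right n _

theorem rep_le [NeZero k] (a : ZMod k) : rep n a ≤ n + k - 1 := by
  have := ZMod.val_lt (a - (n : ZMod k))
  unfold rep
  omega

@[simp]
theorem natCast_rep [NeZero k] (a : ZMod k) : (rep n a : ZMod k) = a := by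
  simp [rep]

variable (n k) in
def ofZMod (a : ZMod k) : Mnk n k := Mnk.mk n k (rep n a)

theorem mk_eq_ofZMod [NeZero k] {i : ℕ} (hi : n ≤ i) : Mnk.mk n k i = ofZMod n k i :=
  Quotient.sound <| Or.inr
    ⟨hi, le_rep _, (ZMod.natCast_eq_natCast_iff' _ _ _).1 (natCast_rep (i : ZMod k)).symm⟩

theorem toZMod_ofZMod [NeZero k] (a : ZMod k) : toZMod n k (ofZMod n k a) = a := natCast_rep a

theorem ofZMod_injective [NeZero k] : Function.Injective (ofZMod n k) :=
  Function.LeftInverse.injective toZMod_ofZMod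

theorem ofZMod_add [NeZero k] (a b : ZMod k) :
    ofZMod n k (a + b) = Mnk.add n k (ofZMod n k a) (ofZMod n k b) := by
  change _ = Mnk.mk n k (rep n a + rep n b)
  rw [mk_eq_ofZMod (le_add_right (le_rep a))]
  simp

theorem range_ofZMod [NeZero k] :
    Set.range (ofZMod n k) =
      {x | ∃ i : ℕ, n ≤ i ∧ i ≤ n + k - 1 ∧ x = Mnk.mk n k i} := by
  ext x
  constructor
  · rintro ⟨a, rfl⟩
    exact ⟨rep n a, le_rep a, rep_le a, rfl⟩
  · rintro ⟨i, hi, -, rfl⟩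
    exact ⟨i, (mk_eq_ofZMod hi).symm⟩

theorem add_ofZMod_zero [NeZero k] (m : Mnk n k) :
    Mnk.add n k m (ofZMod n k 0) = ofZMod n k (toZMod n k m) := by
  induction m using Mnk.ind with
  | h i =>
    change Mnk.mk n k (i + rep n 0) = _
    rw [mk_eq_ofZMod (le_add_left (le_rep 0))]
    simp

theorem existsUnique_lift [NeZero k] {G : Type*} [AddCommGroup G] {ψ : Mnk n k → G}
    (hψ : ∀ a b, ψ (Mnk.add n k a b) = ψ a + ψ b) :
    ∃! h : ZMod k →+ G, ∀ m, h (toZMod n k m) = ψ m := by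
  have hψ0 : ψ (ofZMod n k 0) = 0 := by
    have := hψ (ofZMod n k 0) (ofZMod n k 0)
    rwa [← ofZMod_add, add_zero, left_eq_add] at this
  let h : ZMod k →+ G := AddMonoidHom.mk' (ψ ∘ ofZMod n k) fun a b => by
    simp only [Function.comp_apply, ofZMod_add, hψ]
  refine ⟨h, fun m => ?_, fun h' hh' => AddMonoidHom.ext fun a => ?_⟩
  · change ψ (ofZMod n k (toZMod n k m)) = ψ m
    rw [← add_ofZMod_zero, hψ, hψ0, add_zero]
  · exact (congrArg h' (toZMod_ofZMod a).symm).trans (hh' _)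

end Mnk

theorem Mnk.groupCompletion_general (n k : ℕ) (hk : 0 < k) :
    ∃ f : ZMod k → Mnk n k,
      Function.Injective f ∧
      (∀ a b : ZMod k, f (a + b) = Mnk.add n k (f a) (f b)) ∧
      Set.range f = {x : Mnk n k | ∃ i : ℕ, n ≤ i ∧ i ≤ n + k - 1 ∧ x = Mnk.mk n k i} ∧
      ∃ φ : Mnk n k → ZMod k,
        (∀ a b : Mnk n k, φ (Mnk.add n k a b) = φ a + φ b) ∧
        ∀ (G : Type) (_ : AddCommGroup G) (ψ : Mnk n k → G),
          (∀ a b : Mnk n k, ψ (Mnk.add n k a b) = ψ a + ψ b) →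
          ∃! h : ZMod k →+ G, ∀ m : Mnk n k, h (φ m) = ψ m := by
  have : NeZero k := ⟨hk.ne'⟩
  exact ⟨Mnk.ofZMod n k, Mnk.ofZMod_injective, Mnk.ofZMod_add, Mnk.range_ofZMod,
    Mnk.toZMod n k, Mnk.toZMod_add, fun G _ ψ hψ => Mnk.existsUnique_lift hψ⟩

/-- The group completion of `M_{n,n+k}` is a cyclic group of order `k`,
isomorphic as a monoid to the subset `{nx, …, (n+k−1)x}` of `M_{n,n+k}`:
there is an injective additive map `f` from `ZMod k` (the cyclic group of
order `k`) onto that subset, and an additive map `φ : M_{n,n+k} → ZMod k`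
satisfying the universal property of the group completion. -/
theorem Mnk.groupCompletion (n k : ℕ) (hn : 0 < n) (hk : 0 < k) :
    ∃ f : ZMod k → Mnk n k,
      Function.Injective f ∧
      (∀ a b : ZMod k, f (a + b) = Mnk.add n k (f a) (f b)) ∧
      Set.range f = {x : Mnk n k | ∃ i : ℕ, n ≤ i ∧ i ≤ n + k - 1 ∧ x = Mnk.mk n k i} ∧
      ∃ φ : Mnk n k → ZMod k,
        (∀ a b : Mnk n k, φ (Mnk.add n k a b) = φ a + φ b) ∧
        ∀ (G : Type) (_ : AddCommGroup G) (ψ : Mnk n k → G),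
          (∀ a b : Mnk n k, ψ (Mnk.add n k a b) = ψ a + ψ b) →
          ∃! h : ZMod k →+ G, ∀ m : Mnk n k, h (φ m) = ψ m :=
  Mnk.groupCompletion_general n k hk
end

section
/- Let (E, w) be a finite weighted graph. Then the graph monoid M(E,w) is a group if and only if E is acyclic. -/
/-- The out-neighbourhood sum `Σ_{e ∈ s⁻¹(v)} r(e)` in the free commutative
monoid `V →₀ ℕ`, for a graph with finitely many edges. -/
noncomputable def frTrans {V E : Type} [Fintype E] [DecidableEq V] (s r : E → V) (v : V) : V →₀ ℕ :=
  ∑ e ∈ Finset.univ.filter (fun e => s e = v), Finsupp.single (r e) 1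

/-- The vertex weight: `w(v) = max{w(e) : e ∈ s⁻¹(v)}` for non-sinks and
`w(v) = 1` for sinks. -/
def fwVert {V E : Type} [Fintype E] [DecidableEq V] (s : E → V) (w : E → ℕ) (v : V) : ℕ :=
  max 1 ((Finset.univ.filter (fun e => s e = v)).sup w)

/-- The defining relations of the graph monoid `M(E,w)`:
`w(v)·v = Σ_{e ∈ s⁻¹(v)} r(e)` for every vertex `v` (so sinks become `0`). -/
def gRel {V E : Type} [Fintype E] [DecidableEq V] (s r : E → V) (w : E → ℕ)
    (a b : V →₀ ℕ) : Prop :=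
  ∃ v : V, a = Finsupp.single v (fwVert s w v) ∧ b = frTrans s r v

/-- The graph monoid `M(E,w)` of a finite weighted graph: the free commutative
monoid on the vertices modulo the congruence generated by the relations. -/
abbrev graphMonoid {V E : Type} [Fintype E] [DecidableEq V] (s r : E → V) (w : E → ℕ) :=
  (addConGen (gRel s r w)).Quotient

/-- The class of `a : V →₀ ℕ` in the graph monoid `M(E,w)`. -/
noncomputable def gMk {V E : Type} [Fintype E] [DecidableEq V] (s r : E → V) (w : E → ℕ)
    (a : V →₀ ℕ) : graphMonoid s r w :=
  (addConGen (gRel s r w)).mk' a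

/-- One vertex steps to another if there is an edge from the first to the second. -/
def eRel {V E : Type} (s r : E → V) (x y : V) : Prop := ∃ e : E, s e = x ∧ r e = y

/-- The set `S` of vertices which do not connect to any cycle. -/
def noCycleSet {V E : Type} (s r : E → V) : Set V :=
  {v : V | ¬ ∃ u : V, Relation.ReflTransGen (eRel s r) v u ∧ Relation.TransGen (eRel s r) u u}

/-!
If `E` has a cycle through `u`, give each vertex that reaches a cycle the weight `⊤ ∈ ℕ∞` and
every other vertex weight `0`. A vertex reaches a cycle iff one of its out-neighbours does, so
this weighting respects every relation `w(v)·v = Σ r(e)` and descends to a homomorphism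
`M(E,w) →+ ℕ∞` sending `u` to the non-unit `⊤`.

If `E` is acyclic, the reverse edge relation is well-founded, and by induction every vertex `v`
is a unit: `v + (w(v) - 1)·v = Σ_{s(e)=v} r(e)` is a sum of units, since `w(v) ≥ 1`.
-/

open Relation

theorem wellFounded_swap_of_forall_not_transGen_self {V : Type*} [Finite V] {R : V → V → Prop}
    (hR : ∀ u, ¬ TransGen R u u) : WellFounded (Function.swap R) :=
  have : IsTrans V (Function.swap (TransGen R)) := ⟨fun _ _ _ hab hbc => hbc.trans hab⟩
  have : Std.Irrefl (Function.swap (TransGen R)) := ⟨hR⟩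
  Subrelation.wf (r := Function.swap (TransGen R)) (fun h => TransGen.single h)
    (Finite.wellFounded_of_trans_of_irrefl (Function.swap (TransGen R)))

section CycleWeight

variable {V E : Type} (s r : E → V)

lemma mem_noCycleSet_iff {v : V} :
    v ∈ noCycleSet s r ↔ ∀ e, s e = v → r e ∈ noCycleSet s r := by
  simp only [noCycleSet, Set.mem_ofPred_eq]
  constructor
  · rintro h e rfl ⟨u, hu, hcyc⟩
    exact h ⟨u, ReflTransGen.head ⟨e, rfl, rfl⟩ hu, hcyc⟩
  · rintro h ⟨u, hvu, hcyc⟩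
    rcases hvu.cases_head with rfl | ⟨x, ⟨e, hse, rfl⟩, hxu⟩
    · obtain ⟨x, ⟨e, hse, rfl⟩, hxv⟩ := TransGen.head'_iff.mp hcyc
      exact h e hse ⟨v, hxv, hcyc⟩
    · exact h e hse ⟨u, hxu, hcyc⟩

noncomputable def cycleWeight : (V →₀ ℕ) →+ ℕ∞ :=
  Finsupp.liftAddHom fun v => multiplesHom ℕ∞ ((noCycleSet s r)ᶜ.indicator (fun _ => ⊤) v)

lemma cycleWeight_single (v : V) (n : ℕ) :
    cycleWeight s r (Finsupp.single v n) = n • (noCycleSet s r)ᶜ.indicator (fun _ => ⊤) v :=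
  Finsupp.liftAddHom_apply_single _ _ _

lemma cycleWeight_single_one_of_transGen {u : V} (hu : TransGen (eRel s r) u u) :
    cycleWeight s r (Finsupp.single u 1) = ⊤ := by
  rw [cycleWeight_single, one_smul, Set.indicator_of_mem]
  exact fun h => h ⟨u, ReflTransGen.refl, hu⟩

variable [Fintype E] [DecidableEq V] (w : E → ℕ)

lemma one_le_fwVert (v : V) : 1 ≤ fwVert s w v := le_max_left _ _

lemma cycleWeight_frTrans (v : V) :
    cycleWeight s r (frTrans s r v) =
      ∑ e ∈ Finset.univ.filter (fun e => s e = v),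
        (noCycleSet s r)ᶜ.indicator (fun _ => ⊤) (r e) := by
  simp only [frTrans, map_sum, cycleWeight_single, one_smul]

lemma addConGen_le_ker_cycleWeight : addConGen (gRel s r w) ≤ AddCon.ker (cycleWeight s r) := by
  refine AddCon.addConGen_le.mpr ?_
  rintro _ _ ⟨v, rfl, rfl⟩
  change cycleWeight s r _ = cycleWeight s r _
  rw [cycleWeight_single, cycleWeight_frTrans]
  by_cases hv : v ∈ noCycleSet s r
  · rw [Set.indicator_of_notMem (not_not.mpr hv), smul_zero, eq_comm]
    refine Finset.sum_eq_zero fun e he => Set.indicator_of_notMem (not_not.mpr ?_) _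
    exact (mem_noCycleSet_iff s r).mp hv e (Finset.mem_filter.mp he).2
  · obtain ⟨e, hse, hre⟩ : ∃ e, s e = v ∧ r e ∉ noCycleSet s r := by
      by_contra! h
      exact hv ((mem_noCycleSet_iff s r).mpr h)
    rw [Set.indicator_of_mem hv, eq_comm, ENat.sum_eq_top.mpr
      ⟨e, Finset.mem_filter.mpr ⟨Finset.mem_univ e, hse⟩, Set.indicator_of_mem hre _⟩,
      nsmul_eq_mul, ENat.mul_top (by have := one_le_fwVert s w v; positivity)]

end CycleWeight

section GraphMonoid

variable {V E : Type} [Fintype E] [DecidableEq V] (s r : E → V) (w : E → ℕ)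

lemma gMk_surjective : Function.Surjective (gMk s r w) := AddCon.mk'_surjective

lemma gMk_add (a b : V →₀ ℕ) : gMk s r w (a + b) = gMk s r w a + gMk s r w b :=
  map_add _ a b

lemma gMk_single_fwVert (v : V) :
    gMk s r w (Finsupp.single v (fwVert s w v)) = gMk s r w (frTrans s r v) :=
  (AddCon.eq _).mpr (AddConGen.Rel.of _ _ ⟨v, rfl, rfl⟩)

lemma gMk_frTrans (v : V) :
    gMk s r w (frTrans s r v) =
      ∑ e ∈ Finset.univ.filter (fun e => s e = v), gMk s r w (Finsupp.single (r e) 1) :=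
  map_sum (addConGen (gRel s r w)).mk' _ _

theorem isAddUnit_gMk_single_one [Finite V] (hac : ¬ ∃ u, TransGen (eRel s r) u u) (v : V) :
    IsAddUnit (gMk s r w (Finsupp.single v 1)) := by
  induction v using (wellFounded_swap_of_forall_not_transGen_self (not_exists.mp hac)).induction
    with
  | _ v ih =>
    have hsum : IsAddUnit (gMk s r w (Finsupp.single v (fwVert s w v))) := by
      rw [gMk_single_fwVert, gMk_frTrans, IsAddUnit.sum_iff]
      intro e he
      exact ih (r e) ⟨e, (Finset.mem_filter.mp he).2, rfl⟩
    obtain ⟨k, hk⟩ := Nat.exists_eq_add_of_le (one_le_fwVert s w v)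
    rw [hk, Finsupp.single_add, gMk_add] at hsum
    exact isAddUnit_of_add_isAddUnit_left hsum

theorem isAddUnit_gMk [Finite V] (hac : ¬ ∃ u, TransGen (eRel s r) u u) (a : V →₀ ℕ) :
    IsAddUnit (gMk s r w a) := by
  induction a using Finsupp.induction_linear with
  | zero => rw [gMk, map_zero]; exact isAddUnit_zero
  | add a b ha hb => exact gMk_add s r w a b ▸ ha.add hb
  | single v n =>
    rw [← Finsupp.smul_single_one, gMk, map_nsmul]
    exact (isAddUnit_gMk_single_one s r w hac v).nsmul n

theorem not_isAddUnit_gMk_single_one_of_transGen {u : V} (hu : TransGen (eRel s r) u u) :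
    ¬ IsAddUnit (gMk s r w (Finsupp.single u 1)) := by
  intro hunit
  have := hunit.map ((addConGen (gRel s r w)).lift _ (addConGen_le_ker_cycleWeight s r w))
  rw [gMk, AddCon.lift_mk', cycleWeight_single_one_of_transGen s r hu] at this
  simp at this

end GraphMonoid

theorem graphMonoid_group_iff_acyclic_general {V E : Type} [Fintype V] [Fintype E] [DecidableEq V]
    (s r : E → V) (w : E → ℕ) :
    (∀ x : graphMonoid s r w, ∃ y : graphMonoid s r w, x + y = 0) ↔
      ¬ ∃ u : V, Relation.TransGen (eRel s r) u u := by
  simp_rw [← isAddUnit_iff_exists_neg]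
  constructor
  · rintro hunit ⟨u, hu⟩
    exact not_isAddUnit_gMk_single_one_of_transGen s r w hu (hunit _)
  · intro hac x
    obtain ⟨a, rfl⟩ := gMk_surjective s r w x
    exact isAddUnit_gMk s r w hac a

/-- For a finite weighted graph `(E,w)`, the graph monoid `M(E,w)` is a group
if and only if `E` is acyclic. -/
theorem graphMonoid_group_iff_acyclic {V E : Type} [Fintype V] [Fintype E] [DecidableEq V]
    (s r : E → V) (w : E → ℕ) (hw : ∀ e : E, 0 < w e) :
    (∀ x : graphMonoid s r w, ∃ y : graphMonoid s r w, x + y = 0) ↔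
      ¬ ∃ u : V, Relation.TransGen (eRel s r) u u :=
  graphMonoid_group_iff_acyclic_general s r w
end

section
/- For a sandpile graph E, the sandpile monoid SP(E) is finite, and its cardinality equals the product over all non-sink vertices v of |s⁻¹(v)|. -/
/-- The out-degree `|s⁻¹(v)|` of a vertex. -/
def outdeg {V E : Type} [Fintype E] [DecidableEq V] (s : E → V) (v : V) : ℕ :=
  (Finset.univ.filter (fun e => s e = v)).card

/-- The defining relations of the sandpile monoid `SP(E)`:  `s = 0` for the
sink `σ`, and `|s⁻¹(v)|·v = Σ_{e ∈ s⁻¹(v)} r(e)` for each non-sink vertex `v`. -/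
def spRel {V E : Type} [Fintype E] [DecidableEq V] (s r : E → V) (σ : V)
    (a b : V →₀ ℕ) : Prop :=
  (∃ v : V, (∃ e : E, s e = v) ∧
      a = Finsupp.single v (outdeg s v) ∧ b = frTrans s r v) ∨
    (a = Finsupp.single σ 1 ∧ b = 0)

/-- The sandpile monoid `SP(E)`: the free commutative monoid on the vertices
modulo the congruence generated by the sandpile relations. -/
abbrev spMonoid {V E : Type} [Fintype E] [DecidableEq V] (s r : E → V) (σ : V) :=
  (addConGen (spRel s r σ)).Quotient

/-!
Orient the defining relations of `SP(E)` as moves on chip configurations `f : V →₀ ℕ`: a vertex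
`v` holding `|s⁻¹(v)|` chips sends one chip along each outgoing edge, and the sink discards a chip
(it behaves as a vertex firing one chip into nothing). Every move consumes chips of a single
vertex and depends only on that vertex, so two different moves commute and the rewriting system
is confluent; its joinability relation is then the congruence generated by the relations.
It also terminates: along a cycle of moves, let `T v` count the firings of `v`. Chip
conservation forces the sink never to fire, and a vertex receiving a chip from a vertex that
fires must fire itself; as every vertex reaches the sink, nothing fires. Hence each class
contains exactly one configuration on which no move applies, i.e. one normal form `Σ kᵥ·v` with
`kᵥ < |s⁻¹(v)|`.
-/

open Finsupp Relation

section AddStep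

variable {M : Type*} [AddCommMonoid M] {R : M → M → Prop}

variable (R) in
def AddStep (a b : M) : Prop :=
  ∃ c x y, R x y ∧ a = c + x ∧ b = c + y

theorem AddStep.add_right {a b : M} (h : AddStep R a b) (d : M) : AddStep R (a + d) (b + d) := by
  obtain ⟨c, x, y, hxy, rfl, rfl⟩ := h
  exact ⟨c + d, x, y, hxy, add_right_comm .., add_right_comm ..⟩

theorem AddStep.add_left {a b : M} (h : AddStep R a b) (d : M) : AddStep R (d + a) (d + b) := by
  simpa only [add_comm d] using h.add_right d

theorem reflTransGen_addStep_add {a b a' b' : M} (h : ReflTransGen (AddStep R) a b)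
    (h' : ReflTransGen (AddStep R) a' b') : ReflTransGen (AddStep R) (a + a') (b + b') :=
  (h.lift (· + a') fun _ _ hs => hs.add_right a').trans
    (h'.lift (b + ·) fun _ _ hs => hs.add_left b)

theorem addConGen_of_reflTransGen_addStep {a b : M} (h : ReflTransGen (AddStep R) a b) :
    addConGen R a b := by
  induction h with
  | refl => exact (addConGen R).refl a
  | tail _ hs ih =>
    obtain ⟨c, x, y, hxy, rfl, rfl⟩ := hs
    exact (addConGen R).trans ih ((addConGen R).add ((addConGen R).refl c) (.of x y hxy))

theorem addConGen_iff_join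
    (hcr : ∀ a b c, AddStep R a b → AddStep R a c →
      ∃ d, ReflGen (AddStep R) b d ∧ ReflTransGen (AddStep R) c d) {a b : M} :
    addConGen R a b ↔ Join (ReflTransGen (AddStep R)) a b := by
  refine ⟨fun h => ?_, fun ⟨d, had, hbd⟩ => ?_⟩
  · have hequiv := equivalence_join_reflTransGen hcr
    induction h with
    | of x y hxy =>
      exact ⟨y, .single ⟨0, x, y, hxy, (zero_add x).symm, (zero_add y).symm⟩, .refl⟩
    | refl x => exact hequiv.refl x
    | symm _ ih => exact hequiv.symm ih
    | trans _ _ ih₁ ih₂ => exact hequiv.trans ih₁ ih₂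
    | add _ _ ih₁ ih₂ =>
      obtain ⟨d₁, ha₁, hb₁⟩ := ih₁
      obtain ⟨d₂, ha₂, hb₂⟩ := ih₂
      exact ⟨d₁ + d₂, reflTransGen_addStep_add ha₁ ha₂, reflTransGen_addStep_add hb₁ hb₂⟩
  · exact (addConGen R).trans (addConGen_of_reflTransGen_addStep had)
      ((addConGen R).symm (addConGen_of_reflTransGen_addStep hbd))

end AddStep

section FireRel

variable {V : Type*} {n : V → ℕ} {Y : V → V →₀ ℕ}

variable (n Y) in
def fireRel (x y : V →₀ ℕ) : Prop :=
  ∃ v, x = single v (n v) ∧ y = Y v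

theorem exists_eq_add_single_of_le {f : V →₀ ℕ} {v : V} {k : ℕ} (h : k ≤ f v) :
    ∃ c, f = c + single v k := by
  obtain ⟨c, hc⟩ := le_iff_exists_add.mp (single_le_iff.mpr h)
  exact ⟨c, hc.trans (add_comm _ _)⟩

theorem exists_eq_add_single_of_add_single_eq {c₁ c₂ : V →₀ ℕ} {u v : V} {k l : ℕ}
    (huv : u ≠ v) (h : c₁ + single u k = c₂ + single v l) :
    ∃ d, c₁ = d + single v l ∧ c₂ = d + single u k := by
  obtain ⟨d, hd⟩ : ∃ d, c₁ = d + single v l := by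
    refine exists_eq_add_single_of_le ?_
    have hv := congrArg (· v) h
    simp only [coe_add, Pi.add_apply, single_eq_same, single_eq_of_ne huv.symm] at hv
    omega
  refine ⟨d, hd, add_right_cancel (b := single v l) ?_⟩
  rw [← h, hd, add_right_comm]

theorem addStep_fireRel_diamond {a b₁ b₂ : V →₀ ℕ}
    (h₁ : AddStep (fireRel n Y) a b₁) (h₂ : AddStep (fireRel n Y) a b₂) :
    b₁ = b₂ ∨ ∃ d, AddStep (fireRel n Y) b₁ d ∧ AddStep (fireRel n Y) b₂ d := by
  obtain ⟨c₁, _, _, ⟨v₁, rfl, rfl⟩, rfl, rfl⟩ := h₁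
  obtain ⟨c₂, _, _, ⟨v₂, rfl, rfl⟩, h, rfl⟩ := h₂
  by_cases hv : v₁ = v₂
  · subst hv
    exact .inl (by rw [add_right_cancel h])
  · obtain ⟨d, rfl, rfl⟩ := exists_eq_add_single_of_add_single_eq hv h
    refine .inr ⟨d + Y v₁ + Y v₂, ⟨d + Y v₁, _, _, ⟨v₂, rfl, rfl⟩, add_right_comm .., rfl⟩,
      ⟨d + Y v₂, _, _, ⟨v₁, rfl, rfl⟩, add_right_comm .., add_right_comm ..⟩⟩

theorem addConGen_fireRel_iff {a b : V →₀ ℕ} :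
    addConGen (fireRel n Y) a b ↔ Join (ReflTransGen (AddStep (fireRel n Y))) a b :=
  addConGen_iff_join fun _ _ _ hb hc => (addStep_fireRel_diamond hb hc).elim
    (fun h => ⟨_, h ▸ .refl, .refl⟩) fun ⟨d, hbd, hcd⟩ => ⟨d, .single hbd, .single hcd⟩

theorem forall_not_addStep_fireRel_iff {f : V →₀ ℕ} :
    (∀ g, ¬ AddStep (fireRel n Y) f g) ↔ ∀ v, f v < n v := by
  refine ⟨fun h v => not_le.mp fun hv => ?_, ?_⟩
  · obtain ⟨c, rfl⟩ := exists_eq_add_single_of_le hv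
    exact h (c + Y v) ⟨c, _, _, ⟨v, rfl, rfl⟩, rfl, rfl⟩
  · rintro h _ ⟨c, _, _, ⟨v, rfl, rfl⟩, rfl, rfl⟩
    simpa using h v

theorem eq_of_reflTransGen_addStep_fireRel {g h : V →₀ ℕ} (hg : ∀ v, g v < n v)
    (hgh : ReflTransGen (AddStep (fireRel n Y)) g h) : g = h :=
  hgh.cases_head.resolve_right fun ⟨g', hg', _⟩ => forall_not_addStep_fireRel_iff.mpr hg g' hg'

theorem exists_reflTransGen_addStep_fireRel (hwf : WellFounded (flip (AddStep (fireRel n Y))))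
    (f : V →₀ ℕ) : ∃ g, ReflTransGen (AddStep (fireRel n Y)) f g ∧ ∀ v, g v < n v := by
  obtain ⟨g, hfg, hmin⟩ := hwf.has_min {g | ReflTransGen (AddStep (fireRel n Y)) f g} ⟨f, .refl⟩
  exact ⟨g, hfg, forall_not_addStep_fireRel_iff.mp fun g' hg' => hmin g' (hfg.tail hg') hg'⟩

theorem bijective_coe_stable_fireRel (hwf : WellFounded (flip (AddStep (fireRel n Y)))) :
    Function.Bijective fun g : {g : V →₀ ℕ // ∀ v, g v < n v} =>
      ((g : V →₀ ℕ) : (addConGen (fireRel n Y)).Quotient) := by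
  refine ⟨fun g₁ g₂ h => ?_, fun q => q.induction_on fun f => ?_⟩
  · obtain ⟨d, h₁, h₂⟩ := addConGen_fireRel_iff.mp ((AddCon.eq _).mp h)
    exact Subtype.ext ((eq_of_reflTransGen_addStep_fireRel g₁.2 h₁).trans
      (eq_of_reflTransGen_addStep_fireRel g₂.2 h₂).symm)
  · obtain ⟨g, hfg, hg⟩ := exists_reflTransGen_addStep_fireRel hwf f
    exact ⟨⟨g, hg⟩, (AddCon.eq _).mpr (addConGen_fireRel_iff.mpr ⟨g, .refl, hfg⟩)⟩

variable (n) in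
noncomputable def stableEquivPi [Finite V] : {g : V →₀ ℕ // ∀ v, g v < n v} ≃ Π v, Fin (n v) where
  toFun g v := ⟨g.1 v, g.2 v⟩
  invFun h := ⟨equivFunOnFinite.symm fun v => h v, fun v => (h v).2⟩
  left_inv g := by ext; simp
  right_inv h := by ext; simp

theorem finite_and_natCard_quotient_fireRel [Fintype V]
    (hwf : WellFounded (flip (AddStep (fireRel n Y)))) :
    Finite (addConGen (fireRel n Y)).Quotient ∧
      Nat.card (addConGen (fireRel n Y)).Quotient = ∏ v, n v := by
  let e := (Equiv.ofBijective _ (bijective_coe_stable_fireRel hwf)).symm.trans (stableEquivPi n)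
  refine ⟨.of_equiv _ e.symm, ?_⟩
  rw [Nat.card_congr e, Nat.card_pi]
  simp

theorem degree_le_of_addStep_fireRel (hY : ∀ v, degree (Y v) ≤ n v) {a b : V →₀ ℕ}
    (h : AddStep (fireRel n Y) a b) : degree b ≤ degree a := by
  obtain ⟨c, _, _, ⟨v, rfl, rfl⟩, rfl, rfl⟩ := h
  simpa using hY v

theorem exists_linearCombination_of_transGen {f g : V →₀ ℕ}
    (h : TransGen (AddStep (fireRel n Y)) f g) :
    ∃ T : V →₀ ℕ, T ≠ 0 ∧ f + linearCombination ℕ Y T =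
      g + linearCombination ℕ (fun v => single v (n v)) T := by
  induction h with
  | single hs =>
    obtain ⟨c, _, _, ⟨v, rfl, rfl⟩, rfl, rfl⟩ := hs
    refine ⟨single v 1, by simp, ?_⟩
    simp only [linearCombination_single, one_smul]
    exact add_right_comm ..
  | tail _ hs ih =>
    obtain ⟨T, -, hT⟩ := ih
    obtain ⟨c, _, _, ⟨v, rfl, rfl⟩, rfl, rfl⟩ := hs
    refine ⟨T + single v 1, fun h => by simpa using congrArg (· v) h, ?_⟩
    simp only [map_add, linearCombination_single, one_smul, ← add_assoc, hT]
    abel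

theorem eq_zero_of_linearCombination_eq [Fintype V] {σ : V} (hY : ∀ v, degree (Y v) ≤ n v)
    (hσ : degree (Y σ) < n σ) (hreach : ∀ v, ReflTransGen (fun v u => Y v u ≠ 0) v σ)
    {T : V →₀ ℕ}
    (hT : linearCombination ℕ Y T = linearCombination ℕ (fun v => single v (n v)) T) :
    T = 0 := by
  rw [linearCombination_apply, linearCombination_apply, sum_fintype _ _ (by simp),
    sum_fintype _ _ (by simp)] at hT
  simp only [smul_single, smul_eq_mul] at hT
  have hcoord (u : V) : ∑ v, T v * Y v u = T u * n u := by
    classical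
    simpa [single_apply, -single_mul] using congrArg (· u) hT
  have hTσ : T σ = 0 := by
    have hdeg : ∑ v, T v * degree (Y v) = ∑ v, T v * n v := by
      simpa only [map_sum, map_nsmul, degree_single, smul_eq_mul] using congrArg degree hT
    have := (Finset.sum_eq_sum_iff_of_le fun v _ => Nat.mul_le_mul_left _ (hY v)).1 hdeg σ
      (Finset.mem_univ σ)
    by_contra h
    exact hσ.ne (Nat.eq_of_mul_eq_mul_left (Nat.pos_of_ne_zero h) this)
  have hclosed {v u : V} (hvu : Y v u ≠ 0) (hv : T v ≠ 0) : T u ≠ 0 := fun hu => by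
    have := hcoord u
    rw [hu, zero_mul, Finset.sum_eq_zero_iff] at this
    exact mul_ne_zero hv hvu (this v (Finset.mem_univ v))
  ext v
  by_contra hv
  have hpos {w : V} (hw : ReflTransGen (fun v u => Y v u ≠ 0) v w) : T w ≠ 0 := by
    induction hw with
    | refl => exact hv
    | tail _ hedge ih => exact hclosed hedge ih
  exact hpos (hreach v) hTσ

theorem wellFounded_flip_addStep_fireRel [Fintype V] (σ : V) (hY : ∀ v, degree (Y v) ≤ n v)
    (hσ : degree (Y σ) < n σ) (hreach : ∀ v, ReflTransGen (fun v u => Y v u ≠ 0) v σ) :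
    WellFounded (flip (AddStep (fireRel n Y))) := by
  have hacyclic (f : V →₀ ℕ) : ¬ TransGen (AddStep (fireRel n Y)) f f := fun hf => by
    obtain ⟨T, hT0, hT⟩ := exists_linearCombination_of_transGen hf
    exact hT0 (eq_zero_of_linearCombination_eq hY hσ hreach (add_left_cancel hT))
  refine ⟨fun f => ?_⟩
  -- Moves never increase the degree, so from `f` only the finitely many configurations of
  -- degree at most `degree f` are reachable, and an acyclic relation on a finite type is
  -- well-founded.
  let S := {g : V →₀ ℕ // degree g ≤ degree f}
  have : Finite S := (finite_of_degree_le _).to_subtype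
  let Q : S → S → Prop := fun a b => TransGen (AddStep (fireRel n Y)) b a
  have : IsTrans S Q := ⟨fun _ _ _ h₁ h₂ => h₂.trans h₁⟩
  have : Std.Irrefl Q := ⟨fun a => hacyclic a⟩
  refine Acc.of_downward_closed Subtype.val (fun {a b} (h : AddStep (fireRel n Y) a.1 b) =>
    ⟨⟨b, (degree_le_of_addStep_fireRel hY h).trans a.2⟩, rfl⟩) (⟨f, le_rfl⟩ : S) ?_
  exact Subrelation.accessible (r := Q) (fun h => TransGen.single h)
    ((Finite.wellFounded_of_trans_of_irrefl Q).apply _)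

end FireRel

section Sandpile

variable {V E : Type} {s r : E → V} {σ v : V}

theorem exists_source_iff_ne (hsink : ¬ ∃ e, s e = σ) (huniq : ∀ v, (¬ ∃ e, s e = v) → v = σ) :
    (∃ e, s e = v) ↔ v ≠ σ :=
  ⟨fun hv hσ => hsink (hσ ▸ hv), fun hσ => not_not.mp (mt (huniq v) hσ)⟩

variable [Fintype E] [DecidableEq V]

theorem outdeg_eq_zero (h : ¬ ∃ e, s e = v) : outdeg s v = 0 := by
  simpa [outdeg, Finset.filter_eq_empty_iff] using h

theorem frTrans_eq_zero (h : ¬ ∃ e, s e = v) : frTrans s r v = 0 := by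
  simp_all [frTrans]

theorem degree_frTrans : degree (frTrans s r v) = outdeg s v := by
  simp [frTrans, outdeg, map_sum]

theorem frTrans_apply_ne_zero {u : V} (h : eRel s r v u) : frTrans s r v u ≠ 0 := by
  obtain ⟨e, rfl, rfl⟩ := h
  simp only [frTrans, finsetSum_apply, single_apply, Finset.sum_boole, Nat.cast_id, ne_eq,
    Finset.card_eq_zero, Finset.filter_eq_empty_iff, Finset.mem_filter, Finset.mem_univ, true_and,
    not_forall, not_not]
  exact ⟨e, rfl, rfl⟩

theorem spRel_eq_fireRel (hsink : ¬ ∃ e, s e = σ) (huniq : ∀ v, (¬ ∃ e, s e = v) → v = σ) :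
    spRel s r σ = fireRel (Function.update (outdeg s) σ 1) (frTrans s r) := by
  ext x y
  constructor
  · rintro (⟨v, hv, rfl, rfl⟩ | ⟨rfl, rfl⟩)
    · refine ⟨v, ?_, rfl⟩
      rw [Function.update_of_ne ((exists_source_iff_ne hsink huniq).mp hv)]
    · exact ⟨σ, by simp, (frTrans_eq_zero hsink).symm⟩
  · rintro ⟨v, rfl, rfl⟩
    rcases eq_or_ne v σ with rfl | hv
    · exact .inr ⟨by simp, frTrans_eq_zero hsink⟩
    · exact .inl ⟨v, (exists_source_iff_ne hsink huniq).mpr hv, by simp [hv], rfl⟩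

end Sandpile

/-- For a sandpile graph `E` (finite, with unique sink `σ` to which every
vertex connects), the sandpile monoid `SP(E)` is finite and its cardinality is
the product of the out-degrees `|s⁻¹(v)|` over all non-sink vertices `v`. -/
theorem spMonoid_card {V E : Type} [Fintype V] [Fintype E] [DecidableEq V]
    (s r : E → V) (σ : V)
    (hsink : ¬ ∃ e : E, s e = σ)
    (huniq : ∀ v : V, (¬ ∃ e : E, s e = v) → v = σ)
    (hconn : ∀ v : V, Relation.ReflTransGen (eRel s r) v σ) :
    Finite (spMonoid s r σ) ∧
    Nat.card (spMonoid s r σ) =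
      ∏ v ∈ Finset.univ.filter (fun v => ∃ e : E, s e = v), outdeg s v := by
  have hdeg (v : V) : degree (frTrans s r v) ≤ Function.update (outdeg s) σ 1 v := by
    rcases eq_or_ne v σ with rfl | hv
    · simp [degree_frTrans, outdeg_eq_zero hsink]
    · simp [degree_frTrans, hv]
  have hwf := wellFounded_flip_addStep_fireRel σ hdeg
    (by simp [degree_frTrans, outdeg_eq_zero hsink])
    (fun v => ReflTransGen.mono (fun _ _ => frTrans_apply_ne_zero) _ _ (hconn v))
  rw [spMonoid, spRel_eq_fireRel hsink huniq]
  refine (finite_and_natCard_quotient_fireRel hwf).imp_right fun h => h.trans ?_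
  rw [Finset.prod_update_of_mem (Finset.mem_univ σ), one_mul]
  congr 1
  ext v
  simp [exists_source_iff_ne hsink huniq]
end
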